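/- Let E be a real Hilbert space with topological dual E*, let Λ₁, Λ₂, 𝒥 : E → E* be bounded linear maps, and let s, t ∈ ℝ. Define the subspaces μ = {(f, Λ₁f, g, −Λ₂g) : f, g ∈ E} and β(s,t) = {(x, t·φ + s·𝒥x, t·x, φ) : x ∈ E, φ ∈ E*} of E × E* × E × E*. Then the map x ↦ (x, Λ₁x, t·x, −t·(Λ₂x)) is a linear isomorphism from ker(Λ₁ + t²·Λ₂ − s·𝒥) onto β(s,t) ∩ μ. In particular, β(s,t) ∩ μ is nontrivial if and only if ker(Λ₁ + t²·Λ₂ − s·𝒥) is nontrivial, and the two spaces have equal dimension. -/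

import Mathlib

noncomputable section

/-- The subspace `μ = {(f, Λ₁f, g, −Λ₂g) : f, g ∈ E}` of `E × E* × E × E*`. -/
def muSub {E : Type*} [NormedAddCommGroup E] [InnerProductSpace ℝ E]
    (Λ₁ Λ₂ : E →L[ℝ] StrongDual ℝ E) :
    Submodule ℝ (E × StrongDual ℝ E × E × StrongDual ℝ E) where
  carrier := {z | ∃ f g : E, z = (f, Λ₁ f, g, -(Λ₂ g))}
  add_mem' := by
    rintro _ _ ⟨f, g, rfl⟩ ⟨f', g', rfl⟩
    exact ⟨f + f', g + g', by simp [Prod.ext_iff]; abel⟩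
  zero_mem' := ⟨0, 0, by simp; rfl⟩
  smul_mem' := by
    rintro c _ ⟨f, g, rfl⟩
    exact ⟨c • f, c • g, by simp [Prod.ext_iff, Prod.smul_def]⟩

/-- The subspace `β(s,t) = {(x, t·φ + s·𝒥x, t·x, φ) : x ∈ E, φ ∈ E*}` of `E × E* × E × E*`. -/
def betaSub {E : Type*} [NormedAddCommGroup E] [InnerProductSpace ℝ E]
    (J : E →L[ℝ] StrongDual ℝ E) (s t : ℝ) :
    Submodule ℝ (E × StrongDual ℝ E × E × StrongDual ℝ E) where
  carrier := {z | ∃ (x : E) (φ : StrongDual ℝ E), z = (x, t • φ + s • J x, t • x, φ)}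
  add_mem' := by
    rintro _ _ ⟨x, φ, rfl⟩ ⟨x', φ', rfl⟩
    exact ⟨x + x', φ + φ', by simp [Prod.ext_iff, smul_add]; abel⟩
  zero_mem' := ⟨0, 0, by simp; rfl⟩
  smul_mem' := by
    rintro c _ ⟨x, φ, rfl⟩
    refine ⟨c • x, c • φ, ?_⟩
    simp [Prod.ext_iff, Prod.smul_def, smul_add, smul_comm c]

/-
The map `x ↦ (x, Λ₁x, t·x, −t·Λ₂x)` is injective (its first component is the identity), so it
suffices to show that it maps `ker(Λ₁ + t²Λ₂ − s𝒥)` onto `β(s,t) ∩ μ`. A point of `β(s,t) ∩ μ` has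
the form `(x, Λ₁x, g, −Λ₂g)` with `g = t·x` and `Λ₁x = t·φ + s·𝒥x` for `φ = −Λ₂g = −t·Λ₂x`, and
the last equation says exactly `Λ₁x + t²Λ₂x − s𝒥x = 0`.
-/

lemma Submodule.ne_bot_iff_of_linearEquiv {R M N : Type*} [Semiring R] [AddCommMonoid M]
    [AddCommMonoid N] [Module R M] [Module R N] {p : Submodule R M} {q : Submodule R N}
    (e : p ≃ₗ[R] q) : p ≠ ⊥ ↔ q ≠ ⊥ := by
  rw [← Submodule.nontrivial_iff_ne_bot, ← Submodule.nontrivial_iff_ne_bot]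
  exact e.toEquiv.nontrivial_congr

section CauchyData

variable {E : Type*} [NormedAddCommGroup E] [InnerProductSpace ℝ E]
  (Λ₁ Λ₂ J : E →L[ℝ] StrongDual ℝ E) (s t : ℝ)

def cauchyDataMap : E →ₗ[ℝ] E × StrongDual ℝ E × E × StrongDual ℝ E :=
  LinearMap.id.prod (Λ₁.toLinearMap.prod ((t • LinearMap.id).prod (-(t • Λ₂.toLinearMap))))

lemma cauchyDataMap_apply (x : E) :
    cauchyDataMap Λ₁ Λ₂ t x = (x, Λ₁ x, t • x, -(t • Λ₂ x)) := rfl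

lemma cauchyDataMap_injective : Function.Injective (cauchyDataMap Λ₁ Λ₂ t) :=
  fun _ _ h => congrArg Prod.fst h

lemma map_ker_cauchyDataMap :
    (LinearMap.ker (Λ₁ + t ^ 2 • Λ₂ - s • J).toLinearMap).map (cauchyDataMap Λ₁ Λ₂ t)
      = betaSub J s t ⊓ muSub Λ₁ Λ₂ := by
  ext z
  simp only [Submodule.mem_map, LinearMap.mem_ker, ContinuousLinearMap.coe_coe, sub_apply,
    add_apply, smul_apply, Submodule.mem_inf, cauchyDataMap_apply]
  constructor
  · rintro ⟨x, hx, rfl⟩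
    refine ⟨⟨x, -(t • Λ₂ x), ?_⟩, ⟨x, t • x, by rw [map_smul]⟩⟩
    have hΛ₁ : Λ₁ x = t • -(t • Λ₂ x) + s • J x := by
      linear_combination (norm := module) hx
    rw [← hΛ₁]
  · rintro ⟨⟨x, φ, rfl⟩, f, g, hz⟩
    simp only [Prod.ext_iff] at hz
    obtain ⟨rfl, hΛ₁, rfl, hφ⟩ := hz
    rw [hφ, map_smul] at hΛ₁ ⊢
    refine ⟨x, ?_, by rw [← hΛ₁]⟩
    linear_combination (norm := module) -hΛ₁

def kerEquivBetaInfMu :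
    LinearMap.ker (Λ₁ + t ^ 2 • Λ₂ - s • J).toLinearMap ≃ₗ[ℝ] ↥(betaSub J s t ⊓ muSub Λ₁ Λ₂) :=
  (Submodule.equivMapOfInjective _ (cauchyDataMap_injective Λ₁ Λ₂ t) _).trans
    (LinearEquiv.ofEq _ _ (map_ker_cauchyDataMap Λ₁ Λ₂ J s t))

lemma kerEquivBetaInfMu_apply (x : LinearMap.ker (Λ₁ + t ^ 2 • Λ₂ - s • J).toLinearMap) :
    (kerEquivBetaInfMu Λ₁ Λ₂ J s t x : E × StrongDual ℝ E × E × StrongDual ℝ E)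
      = ((x : E), Λ₁ (x : E), t • (x : E), -(t • Λ₂ (x : E))) := rfl

end CauchyData

theorem stmt9_general {E : Type*} [NormedAddCommGroup E] [InnerProductSpace ℝ E]
    (Λ₁ Λ₂ J : E →L[ℝ] StrongDual ℝ E) (s t : ℝ) :
    (∃ e : LinearMap.ker (Λ₁ + t ^ 2 • Λ₂ - s • J).toLinearMap ≃ₗ[ℝ] ↥(betaSub J s t ⊓ muSub Λ₁ Λ₂),
      ∀ x : LinearMap.ker (Λ₁ + t ^ 2 • Λ₂ - s • J).toLinearMap,
        (e x : E × StrongDual ℝ E × E × StrongDual ℝ E)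
          = ((x : E), Λ₁ (x : E), t • (x : E), -(t • Λ₂ (x : E)))) ∧
    (betaSub J s t ⊓ muSub Λ₁ Λ₂ ≠ ⊥ ↔ LinearMap.ker (Λ₁ + t ^ 2 • Λ₂ - s • J).toLinearMap ≠ ⊥) ∧
    Module.rank ℝ (LinearMap.ker (Λ₁ + t ^ 2 • Λ₂ - s • J).toLinearMap)
      = Module.rank ℝ ↥(betaSub J s t ⊓ muSub Λ₁ Λ₂) := by
  let e := kerEquivBetaInfMu Λ₁ Λ₂ J s t
  exact ⟨⟨e, kerEquivBetaInfMu_apply Λ₁ Λ₂ J s t⟩,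
    (Submodule.ne_bot_iff_of_linearEquiv e).symm, e.rank_eq⟩

/-- The map `x ↦ (x, Λ₁x, t·x, −t·Λ₂x)` is a linear isomorphism from
`ker(Λ₁ + t²Λ₂ − s𝒥)` onto `β(s,t) ∩ μ`; in particular the intersection is nontrivial
iff the kernel is, and the two spaces have equal dimension. -/
theorem stmt9 {E : Type*} [NormedAddCommGroup E] [InnerProductSpace ℝ E] [CompleteSpace E]
    (Λ₁ Λ₂ J : E →L[ℝ] StrongDual ℝ E) (s t : ℝ) :
    (∃ e : LinearMap.ker (Λ₁ + t ^ 2 • Λ₂ - s • J).toLinearMap ≃ₗ[ℝ] ↥(betaSub J s t ⊓ muSub Λ₁ Λ₂),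
      ∀ x : LinearMap.ker (Λ₁ + t ^ 2 • Λ₂ - s • J).toLinearMap,
        (e x : E × StrongDual ℝ E × E × StrongDual ℝ E)
          = ((x : E), Λ₁ (x : E), t • (x : E), -(t • Λ₂ (x : E)))) ∧
    (betaSub J s t ⊓ muSub Λ₁ Λ₂ ≠ ⊥ ↔ LinearMap.ker (Λ₁ + t ^ 2 • Λ₂ - s • J).toLinearMap ≠ ⊥) ∧
    Module.rank ℝ (LinearMap.ker (Λ₁ + t ^ 2 • Λ₂ - s • J).toLinearMap)
      = Module.rank ℝ ↥(betaSub J s t ⊓ muSub Λ₁ Λ₂) :=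
  stmt9_general Λ₁ Λ₂ J s t
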